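/- Let G be a simple stochastic game and let T be an end component of G with t ∉ T and z ∉ T such that no Minimizer state of T has an exiting action (i.e. there is no s ∈ T ∩ S_min and a ∈ Av(s) with (s,a) exiting T). Then the greatest solution U* of the Bellman equations satisfies U*(s) = 1 for every s ∈ T. -/
import Mathlib


/-- A simple stochastic game (SG): a finite set of states `S` partitioned into
Maximizer states (`isMax s = true`) and Minimizer states (`isMax s = false`),
a target state, a sink state, a finite set of actions `A`, a nonempty set of
available actions at each state, and a transition function assigning to each
state and available action a probability distribution over states; the target
and the sink each have exactly one available action, a self-loop with
probability 1. -/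
structure SG (S A : Type) [Fintype S] [DecidableEq S] [Fintype A] [DecidableEq A] where
  isMax : S → Bool
  target : S
  sink : S
  target_ne_sink : target ≠ sink
  Av : S → Finset A
  Av_nonempty : ∀ s, (Av s).Nonempty
  δ : S → A → S → ℝ
  δ_nonneg : ∀ s a s', 0 ≤ δ s a s'
  δ_sum : ∀ s, ∀ a ∈ Av s, ∑ s', δ s a s' = 1
  target_loop : ∃ a, Av target = {a} ∧ δ target a target = 1
  sink_loop : ∃ a, Av sink = {a} ∧ δ sink a sink = 1

namespace SG

variable {S A : Type} [Fintype S] [DecidableEq S] [Fintype A] [DecidableEq A]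

/-- `f(s,a) := Σ_{s'} δ(s,a)(s') · f(s')`. -/
noncomputable def fval (G : SG S A) (f : S → ℝ) (s : S) (a : A) : ℝ :=
  ∑ s', G.δ s a s' * f s'

/-- `f : S → [0,1]`. -/
def InUnit (f : S → ℝ) : Prop := ∀ s, 0 ≤ f s ∧ f s ≤ 1

/-- The right-hand side of the Bellman equations at a (non-target, non-sink)
state `s`, with available actions given by `Av'`:
`max_{a ∈ Av'(s)} f(s,a)` at Maximizer states and `min_{a ∈ Av'(s)} f(s,a)`
at Minimizer states. -/
noncomputable def bellmanOn (G : SG S A) (Av' : S → Finset A) (f : S → ℝ) (s : S) : ℝ :=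
  if G.isMax s then sSup (G.fval f s '' ↑(Av' s)) else sInf (G.fval f s '' ↑(Av' s))

/-- `f : S → [0,1]` is a solution of the Bellman equations of the game with
available actions restricted to `Av'`. -/
def IsSolutionOn (G : SG S A) (Av' : S → Finset A) (f : S → ℝ) : Prop :=
  InUnit f ∧ f G.target = 1 ∧ f G.sink = 0 ∧
    ∀ s, s ≠ G.target → s ≠ G.sink → f s = G.bellmanOn Av' f s

/-- `f` is a solution of the Bellman equations of `G`. -/
def IsSolution (G : SG S A) (f : S → ℝ) : Prop := G.IsSolutionOn G.Av f

/-- `V` is the least solution of the Bellman equations of the game with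
available actions restricted to `Av'` (the value function of that game). -/
def IsLeastSolutionOn (G : SG S A) (Av' : S → Finset A) (V : S → ℝ) : Prop :=
  G.IsSolutionOn Av' V ∧ ∀ f, G.IsSolutionOn Av' f → ∀ s, V s ≤ f s

/-- `V` is the value function of `G`: the least solution of the Bellman
equations, in the pointwise order. -/
def IsValue (G : SG S A) (V : S → ℝ) : Prop := G.IsLeastSolutionOn G.Av V

/-- `U` is the greatest solution of the Bellman equations of `G`, in the
pointwise order. -/
def IsGreatestSolution (G : SG S A) (U : S → ℝ) : Prop :=
  G.IsSolution U ∧ ∀ f, G.IsSolution f → ∀ s, f s ≤ U s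

/-- `(s,a)` exits `T`: some successor with positive probability is outside `T`. -/
def Exits (G : SG S A) (T : Finset S) (s : S) (a : A) : Prop :=
  ∃ s', s' ∉ T ∧ 0 < G.δ s a s'

/-- `exit^max_f(T)`: the maximum of `f(s,a)` over Maximizer states `s ∈ T`
and available actions `a` with `(s,a)` exiting `T` (max ∅ = 0). -/
noncomputable def exitMax (G : SG S A) (f : S → ℝ) (T : Finset S) : ℝ :=
  sSup (insert (0:ℝ)
    {x : ℝ | ∃ s ∈ T, G.isMax s = true ∧ ∃ a ∈ G.Av s, G.Exits T s a ∧ x = G.fval f s a})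

/-- `exit^min_f(T)`: the minimum of `f(s,a)` over Minimizer states `s ∈ T`
and available actions `a` with `(s,a)` exiting `T` (min ∅ = 1). -/
noncomputable def exitMin (G : SG S A) (f : S → ℝ) (T : Finset S) : ℝ :=
  sInf (insert (1:ℝ)
    {x : ℝ | ∃ s ∈ T, G.isMax s = false ∧ ∃ a ∈ G.Av s, G.Exits T s a ∧ x = G.fval f s a})

/-- `T` is an end component of the game with available actions restricted to
`Av'`: `T` is nonempty and there is a nonempty set `B` of actions, each
available at some state of `T`, such that (1) every `a ∈ B ∩ Av'(s)` for
`s ∈ T` stays in `T`, and (2) every state of `T` can reach every other state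
of `T` by a finite path staying in `T` and using only actions of `B`. -/
def IsECOn (G : SG S A) (Av' : S → Finset A) (T : Finset S) : Prop :=
  T.Nonempty ∧ ∃ B : Finset A, B.Nonempty ∧
    (∀ a ∈ B, ∃ s ∈ T, a ∈ Av' s) ∧
    (∀ s ∈ T, ∀ a ∈ B ∩ Av' s, ∀ s', 0 < G.δ s a s' → s' ∈ T) ∧
    (∀ s ∈ T, ∀ s' ∈ T, Relation.ReflTransGen
      (fun x y => x ∈ T ∧ ∃ a ∈ B ∩ Av' x, 0 < G.δ x a y) s s')

/-- `T` is an end component (EC) of `G`. -/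
def IsEC (G : SG S A) (T : Finset S) : Prop := G.IsECOn G.Av T

/-- `T` is a maximal end component (MEC) of the game with available actions
restricted to `Av'`. -/
def IsMECOn (G : SG S A) (Av' : S → Finset A) (T : Finset S) : Prop :=
  G.IsECOn Av' T ∧ ∀ T', G.IsECOn Av' T' → T ⊆ T' → T = T'

/-- `T` is a maximal end component (MEC) of `G`. -/
def IsMEC (G : SG S A) (T : Finset S) : Prop := G.IsMECOn G.Av T

/-- The available actions of the game obtained from `G` by removing, at every
Minimizer state `s`, each action `a ∈ Av(s)` with `f(s,a) > f(s)`. -/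
noncomputable def restrictAv (G : SG S A) (f : S → ℝ) (s : S) : Finset A :=
  if G.isMax s then G.Av s
  else (G.Av s).filter (fun a => ¬ f s < G.fval f s a)

/-- `T` is a simple end component (SEC) of `G`, with respect to the value
function `V`: an EC with `V(s) = exit^max_V(T)` for all `s ∈ T`. -/
def IsSEC (G : SG S A) (V : S → ℝ) (T : Finset S) : Prop :=
  G.IsEC T ∧ ∀ s ∈ T, V s = G.exitMax V T

/-- `T` is a maximal simple end component (MSEC) of `G` with respect to `V`. -/
def IsMSEC (G : SG S A) (V : S → ℝ) (T : Finset S) : Prop :=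
  G.IsSEC V T ∧ ∀ T', G.IsSEC V T' → T ⊆ T' → T = T'

/-- `DEFLATE(T,f)`: equal to `min(f(s), exit^max_f(T))` on `T` and to `f`
outside `T`. -/
noncomputable def deflate (G : SG S A) (T : Finset S) (f : S → ℝ) (s : S) : ℝ :=
  if s ∈ T then min (f s) (G.exitMax f T) else f s

/-- The Bellman update: `1` at the target, `0` at the sink, and the Bellman
right-hand side elsewhere. -/
noncomputable def bellmanUpdate (G : SG S A) (f : S → ℝ) : S → ℝ :=
  fun s => if s = G.target then 1 else if s = G.sink then 0 else G.bellmanOn G.Av f s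

/-- The lower sequence `L_n` of bounded value iteration: `L_0` is `0`
everywhere except `L_0(target) = 1`, and `L_{n+1}` is the Bellman update
of `L_n`. -/
noncomputable def Lseq (G : SG S A) : ℕ → S → ℝ
  | 0 => fun s => if s = G.target then 1 else 0
  | n + 1 => G.bellmanUpdate (G.Lseq n)

end SG

namespace SG

variable {S A : Type} [Fintype S] [DecidableEq S] [Fintype A] [DecidableEq A]

lemma fval_mono (G : SG S A) {f f' : S → ℝ} (h : ∀ s, f s ≤ f' s) (s : S) (a : A) :
    G.fval f s a ≤ G.fval f' s a :=
  Finset.sum_le_sum fun s' _ => mul_le_mul_of_nonneg_left (h s') (G.δ_nonneg s a s')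

lemma fval_nonneg (G : SG S A) {f : S → ℝ} (hf : ∀ s, 0 ≤ f s) (s : S) (a : A) :
    0 ≤ G.fval f s a :=
  Finset.sum_nonneg fun s' _ => mul_nonneg (G.δ_nonneg s a s') (hf s')

lemma fval_le_one (G : SG S A) {f : S → ℝ} (hf : ∀ s, f s ≤ 1) (s : S) {a : A}
    (ha : a ∈ G.Av s) : G.fval f s a ≤ 1 := by
  have h1 : G.fval f s a ≤ ∑ s', G.δ s a s' := by
    refine Finset.sum_le_sum fun s' _ => ?_
    have := mul_le_mul_of_nonneg_left (hf s') (G.δ_nonneg s a s')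
    simpa using this
  calc G.fval f s a ≤ _ := h1
    _ = 1 := G.δ_sum s a ha

lemma img_nonempty (G : SG S A) (f : S → ℝ) (s : S) :
    (G.fval f s '' ↑(G.Av s)).Nonempty := by
  obtain ⟨a, ha⟩ := G.Av_nonempty s
  exact ⟨G.fval f s a, a, by simpa using ha, rfl⟩

lemma img_finite (G : SG S A) (f : S → ℝ) (s : S) :
    (G.fval f s '' ↑(G.Av s)).Finite :=
  (G.Av s).finite_toSet.image _

lemma bellmanOn_mono (G : SG S A) {f f' : S → ℝ} (h : ∀ s, f s ≤ f' s) (s : S) :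
    G.bellmanOn G.Av f s ≤ G.bellmanOn G.Av f' s := by
  unfold bellmanOn
  split
  · refine csSup_le (G.img_nonempty f s) ?_
    rintro x ⟨a, ha, rfl⟩
    exact le_trans (G.fval_mono h s a)
      (le_csSup (G.img_finite f' s).bddAbove ⟨a, ha, rfl⟩)
  · refine le_csInf (G.img_nonempty f' s) ?_
    rintro x ⟨a, ha, rfl⟩
    exact le_trans (csInf_le (G.img_finite f s).bddBelow ⟨a, ha, rfl⟩)
      (G.fval_mono h s a)

lemma bellmanOn_nonneg (G : SG S A) {f : S → ℝ} (hf : ∀ s, 0 ≤ f s) (s : S) :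
    0 ≤ G.bellmanOn G.Av f s := by
  unfold bellmanOn
  split
  · obtain ⟨a, ha⟩ := G.Av_nonempty s
    exact le_trans (G.fval_nonneg hf s a)
      (le_csSup (G.img_finite f s).bddAbove ⟨a, by simpa using ha, rfl⟩)
  · refine le_csInf (G.img_nonempty f s) ?_
    rintro x ⟨a, _, rfl⟩
    exact G.fval_nonneg hf s a

lemma bellmanOn_le_one (G : SG S A) {f : S → ℝ} (hf : ∀ s, f s ≤ 1) (s : S) :
    G.bellmanOn G.Av f s ≤ 1 := by
  unfold bellmanOn
  split
  · refine csSup_le (G.img_nonempty f s) ?_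
    rintro x ⟨a, ha, rfl⟩
    exact G.fval_le_one hf s (by simpa using ha)
  · obtain ⟨a, ha⟩ := G.Av_nonempty s
    exact le_trans (csInf_le (G.img_finite f s).bddBelow ⟨a, by simpa using ha, rfl⟩)
      (G.fval_le_one hf s ha)

lemma bellmanUpdate_mono (G : SG S A) {f f' : S → ℝ} (h : ∀ s, f s ≤ f' s) (s : S) :
    G.bellmanUpdate f s ≤ G.bellmanUpdate f' s := by
  unfold bellmanUpdate
  split
  · exact le_refl _
  · split
    · exact le_refl _
    · exact G.bellmanOn_mono h s

lemma bellmanUpdate_inUnit (G : SG S A) {f : S → ℝ} (hf : InUnit f) (s : S) :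
    0 ≤ G.bellmanUpdate f s ∧ G.bellmanUpdate f s ≤ 1 := by
  unfold bellmanUpdate
  split
  · exact ⟨zero_le_one, le_refl _⟩
  · split
    · exact ⟨le_refl _, zero_le_one⟩
    · exact ⟨G.bellmanOn_nonneg (fun s => (hf s).1) s,
        G.bellmanOn_le_one (fun s => (hf s).2) s⟩

lemma fix_of_isSolution (G : SG S A) {f : S → ℝ} (hf : G.IsSolution f) (s : S) :
    f s = G.bellmanUpdate f s := by
  obtain ⟨_, hT, hZ, hB⟩ := hf
  unfold bellmanUpdate
  split
  · rename_i h; rw [h, hT]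
  · split
    · rename_i h; rw [h, hZ]
    · exact hB s (by assumption) (by assumption)

lemma isSolution_of_fix (G : SG S A) {f : S → ℝ} (hu : InUnit f)
    (hf : ∀ s, f s = G.bellmanUpdate f s) : G.IsSolution f := by
  refine ⟨hu, ?_, ?_, ?_⟩
  · rw [hf G.target]; simp [bellmanUpdate]
  · rw [hf G.sink]; simp [bellmanUpdate, G.target_ne_sink.symm]
  · intro s hs1 hs2
    rw [hf s]; simp [bellmanUpdate, hs1, hs2]

end SG

/-- Let `T` be an end component with `t ∉ T` and `z ∉ T`
such that no Minimizer state of `T` has an exiting action. Then the greatest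
solution `U*` of the Bellman equations satisfies `U*(s) = 1` for all `s ∈ T`. -/
theorem stmt10 {S A : Type} [Fintype S] [DecidableEq S] [Fintype A] [DecidableEq A]
    (G : SG S A)
    (T : Finset S) (hT : G.IsEC T) (ht : G.target ∉ T) (hz : G.sink ∉ T)
    (hnoMinExit : ¬ ∃ s ∈ T, G.isMax s = false ∧ ∃ a ∈ G.Av s, G.Exits T s a) :
    ∀ U : S → ℝ, G.IsGreatestSolution U → ∀ s ∈ T, U s = 1 := by
  classical
  intro U hU s hs
  obtain ⟨hUsol, hUge⟩ := hU
  have hUunit : SG.InUnit U := hUsol.1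
  obtain ⟨hTne, B, hBne, hBav, hBstay, hBreach⟩ := hT
  -- every state of T has an available action from B
  have hact : ∀ x ∈ T, ∃ a, a ∈ B ∧ a ∈ G.Av x := by
    intro x hx
    obtain ⟨b, hb⟩ := hBne
    obtain ⟨s0, hs0, hbav⟩ := hBav b hb
    rcases (hBreach x hx s0 hs0).cases_head with heq | ⟨c, ⟨_, a, haB, _⟩, _⟩
    · exact ⟨b, hb, heq ▸ hbav⟩
    · exact ⟨a, (Finset.mem_inter.mp haB).1, (Finset.mem_inter.mp haB).2⟩
  -- minimizer actions all stay inside T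
  have hmin : ∀ x ∈ T, ¬ G.isMax x = true → ∀ a ∈ G.Av x, ∀ s', 0 < G.δ x a s' → s' ∈ T := by
    intro x hx hxm a ha s' hδ
    by_contra hs'
    exact hnoMinExit ⟨x, hx, Bool.not_eq_true _ ▸ by simpa using hxm, a, ha, s', hs', hδ⟩
  set g0 : S → ℝ := fun y => if y ∈ T then 1 else U y with hg0def
  have hg0unit : SG.InUnit g0 := by
    intro y; dsimp [g0]; split
    · exact ⟨zero_le_one, le_refl _⟩
    · exact hUunit y
  -- staying actions have fval 1 under g0
  have key : ∀ x, ∀ a ∈ G.Av x, (∀ s', 0 < G.δ x a s' → s' ∈ T) → G.fval g0 x a = 1 := by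
    intro x a ha hstay
    have heq : ∀ s' ∈ (Finset.univ : Finset S), G.δ x a s' * g0 s' = G.δ x a s' := by
      intro s' _
      by_cases hmem : s' ∈ T
      · simp [g0, hmem]
      · have h0 : G.δ x a s' = 0 := by
          by_contra h
          exact hmem (hstay s' (lt_of_le_of_ne (G.δ_nonneg x a s') (Ne.symm h)))
        simp [h0]
    calc G.fval g0 x a = ∑ s', G.δ x a s' := Finset.sum_congr rfl heq
      _ = 1 := G.δ_sum x a ha
  -- g0 is a pre-fixpoint of the Bellman update
  have hg0le : ∀ x, g0 x ≤ G.bellmanUpdate g0 x := by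
    intro x
    by_cases hx : x ∈ T
    · have hxt : x ≠ G.target := fun h => ht (h ▸ hx)
      have hxz : x ≠ G.sink := fun h => hz (h ▸ hx)
      have hg0x : g0 x = 1 := if_pos hx
      simp only [SG.bellmanUpdate, if_neg hxt, if_neg hxz, hg0x]
      unfold SG.bellmanOn
      split
      · obtain ⟨a, haB, haAv⟩ := hact x hx
        have hstay : ∀ s', 0 < G.δ x a s' → s' ∈ T :=
          fun s' h => hBstay x hx a (Finset.mem_inter.mpr ⟨haB, haAv⟩) s' h
        have hf1 : G.fval g0 x a = 1 := key x a haAv hstay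
        exact hf1 ▸ le_csSup (G.img_finite g0 x).bddAbove ⟨a, by simpa using haAv, rfl⟩
      · rename_i hxm
        refine le_csInf (G.img_nonempty g0 x) ?_
        rintro y ⟨a, ha, rfl⟩
        have haAv : a ∈ G.Av x := by simpa using ha
        exact (key x a haAv (hmin x hx hxm a haAv)).ge
    · have hUg0 : ∀ y, U y ≤ g0 y := by
        intro y; dsimp [g0]; split
        · exact (hUunit y).2
        · exact le_refl _
      calc g0 x = U x := if_neg hx
        _ = G.bellmanUpdate U x := G.fix_of_isSolution hUsol x
        _ ≤ G.bellmanUpdate g0 x := G.bellmanUpdate_mono hUg0 x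
  -- Knaster–Tarski: least pre-fixpoint above g0
  set P : Set (S → ℝ) := {f | SG.InUnit f ∧ (∀ y, g0 y ≤ f y) ∧ ∀ y, G.bellmanUpdate f y ≤ f y}
    with hPdef
  have hone : (fun _ => (1 : ℝ)) ∈ P :=
    ⟨fun _ => ⟨zero_le_one, le_refl _⟩, fun y => (hg0unit y).2,
      fun y => (G.bellmanUpdate_inUnit (fun _ => ⟨zero_le_one, le_refl _⟩) y).2⟩
  set g : S → ℝ := fun x => sInf ((fun f => f x) '' P) with hgdef
  have hne : ∀ x, ((fun f => f x) '' P).Nonempty := fun x => ⟨1, _, hone, rfl⟩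
  have hbdd : ∀ x, BddBelow ((fun f => f x) '' P) := by
    intro x; refine ⟨0, ?_⟩; rintro y ⟨f, hf, rfl⟩; exact (hf.1 x).1
  have hgle : ∀ f ∈ P, ∀ x, g x ≤ f x := fun f hf x => csInf_le (hbdd x) ⟨f, hf, rfl⟩
  have hg0g : ∀ x, g0 x ≤ g x := by
    intro x; refine le_csInf (hne x) ?_; rintro y ⟨f, hf, rfl⟩; exact hf.2.1 x
  have hgunit : SG.InUnit g := by
    intro x
    constructor
    · refine le_csInf (hne x) ?_; rintro y ⟨f, hf, rfl⟩; exact (hf.1 x).1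
    · exact hgle _ hone x
  have hFg : ∀ x, G.bellmanUpdate g x ≤ g x := by
    intro x
    refine le_csInf (hne x) ?_
    rintro y ⟨f, hf, rfl⟩
    exact le_trans (G.bellmanUpdate_mono (hgle f hf) x) (hf.2.2 x)
  have hFgP : G.bellmanUpdate g ∈ P :=
    ⟨fun x => G.bellmanUpdate_inUnit hgunit x,
      fun x => le_trans (hg0le x) (G.bellmanUpdate_mono hg0g x),
      fun x => G.bellmanUpdate_mono hFg x⟩
  have hgF : ∀ x, g x = G.bellmanUpdate g x :=
    fun x => le_antisymm (hgle _ hFgP x) (hFg x)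
  have hgsol : G.IsSolution g := G.isSolution_of_fix hgunit hgF
  have hgU := hUge g hgsol s
  have h1 : (1 : ℝ) ≤ g s := by
    have := hg0g s
    simpa [g0, hs] using this
  exact le_antisymm (hUunit s).2 (le_trans h1 hgU)
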